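/- Let (𝒫, 𝓡) be a control problem satisfying the CNMS properties. Then P || Rj, where P = ||𝒫, is nonblocking for every single requirement Rj ∈ 𝓡: every reachable state of P || Rj can reach a marked state. -/

import Mathlib

/-! From any state a marked state is reached in three moves, after fixing one conjunct of the
condition `C` of `μ needs C`. First the sensor automata referenced by the conjunct are driven to
states satisfying it; their events are uncontrollable, so none of them is `μ` and the
restriction never interferes. Then every unreferenced automaton is driven to a marked state:
this leaves the referenced components, hence the conjunct, untouched, so `C` holds all along and
`μ` is never blocked. Finally the referenced automata are driven to marked states, again freely.
Each individual move exists by strong connectivity, and components move independently because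
the alphabets are disjoint. -/

open scoped Classical

/-- A finite-automaton-style structure: alphabet, partial transition
function, initial state, and marked states. -/
structure Aut (Q E : Type) where
  alph : Set E
  δ : Q → E → Option Q
  q0 : Q
  Qm : Set Q

namespace Aut

variable {Q Q1 Q2 E : Type}

/-- Extension of the partial transition function to strings. -/
def run (A : Aut Q E) : Q → List E → Option Q
  | q, [] => some q
  | q, e :: s => (A.δ q e).bind fun q' => A.run q' s

/-- Generated language. -/
def Lang (A : Aut Q E) : Set (List E) := {s | (A.run A.q0 s).isSome}

/-- Marked language. -/
def LangM (A : Aut Q E) : Set (List E) := {s | ∃ q ∈ A.Qm, A.run A.q0 s = some q}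

def Reachable (A : Aut Q E) (q : Q) : Prop := ∃ s, A.run A.q0 s = some q

def Coreachable (A : Aut Q E) (q : Q) : Prop :=
  ∃ s q', A.run q s = some q' ∧ q' ∈ A.Qm

def Trim (A : Aut Q E) : Prop := ∀ q, A.Reachable q ∧ A.Coreachable q

def Nonblocking (A : Aut Q E) : Prop := ∀ q, A.Reachable q → A.Coreachable q

def StronglyConnected (A : Aut Q E) : Prop := ∀ q1 q2 : Q, ∃ s, A.run q1 s = some q2

/-- Synchronous composition of two automata. -/
noncomputable def sync (A : Aut Q1 E) (B : Aut Q2 E) : Aut (Q1 × Q2) E where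
  alph := A.alph ∪ B.alph
  δ := fun p e =>
    if e ∈ A.alph ∧ e ∈ B.alph then
      match A.δ p.1 e, B.δ p.2 e with
      | some a, some b => some (a, b)
      | _, _ => none
    else if e ∈ A.alph then (A.δ p.1 e).map (fun a => (a, p.2))
    else if e ∈ B.alph then (B.δ p.2 e).map (fun b => (p.1, b))
    else none
  q0 := (A.q0, B.q0)
  Qm := {p | p.1 ∈ A.Qm ∧ p.2 ∈ B.Qm}

end Aut

namespace Aut

/-- Synchronous composition of a product system (pairwise disjoint alphabets):
the shuffle automaton on the product state space. -/
noncomputable def shuffle {m : ℕ} {Q : Fin m → Type} {E : Type}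
    (A : ∀ i, Aut (Q i) E) : Aut (∀ i, Q i) E where
  alph := ⋃ i, (A i).alph
  δ := fun q e =>
    if h : ∃ i, e ∈ (A i).alph then
      ((A h.choose).δ (q h.choose) e).map fun q' => Function.update q h.choose q'
    else none
  q0 := fun i => (A i).q0
  Qm := {q | ∀ i, q i ∈ (A i).Qm}

end Aut

namespace Aut

/-- Synchronous composition of an automaton with a state-event invariant
expression `μ needs C`: transitions labeled `μ` are removed from states
where the condition `C` is false. -/
noncomputable def restrict {Q E : Type} (A : Aut Q E) (μ : E) (C : Q → Prop) :
    Aut Q E where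
  alph := A.alph
  δ := fun q e => if e = μ ∧ ¬ C q then none else A.δ q e
  q0 := A.q0
  Qm := A.Qm

end Aut

/-- A literal: a (possibly negated) state reference `P_i.q`. -/
structure Lit (m : ℕ) (Q : Fin m → Type) where
  i : Fin m
  q : Q i
  pos : Bool

/-- Evaluation of a literal at a global state. -/
def Lit.eval {m : ℕ} {Q : Fin m → Type} (l : Lit m Q) (r : ∀ i, Q i) : Prop :=
  if l.pos then r l.i = l.q else r l.i ≠ l.q

/-- A predicate in disjunctive normal form over state references. -/
abbrev DNF (m : ℕ) (Q : Fin m → Type) := List (List (Lit m Q))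

/-- Evaluation of a DNF predicate at a global state. -/
def DNF.eval {m : ℕ} {Q : Fin m → Type} (C : DNF m Q) (r : ∀ i, Q i) : Prop :=
  ∃ conj ∈ C, ∀ l ∈ conj, l.eval r

/-- `K` is controllable with respect to `G` (given uncontrollable events `Su`). -/
def Controllable {QK QG E : Type} (Su : Set E) (K : Aut QK E) (G : Aut QG E) : Prop :=
  ∀ (s : List E) (u : E), u ∈ Su → (K.run K.q0 s).isSome →
    (G.run G.q0 (s ++ [u])).isSome → (K.run K.q0 (s ++ [u])).isSome

/-- A control problem satisfying the CNMS properties. -/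
structure CNMS (m : ℕ) (Q : Fin m → Type) (E : Type) where
  plant : ∀ i, Aut (Q i) E
  /-- controllable events -/
  Sc : Set E
  /-- uncontrollable events -/
  Su : Set E
  /-- the requirements: state-event invariant expressions `μ needs C` -/
  reqs : List (E × DNF m Q)
  /-- controllable and uncontrollable events are disjoint -/
  part : ∀ e : E, ¬(e ∈ Sc ∧ e ∈ Su)
  /-- each alphabet consists of controllable and uncontrollable events -/
  events : ∀ i, (plant i).alph ⊆ Sc ∪ Su
  /-- Property 1: the plant is a product system (pairwise disjoint alphabets) -/
  disj : ∀ i j, i ≠ j → ∀ e, ¬(e ∈ (plant i).alph ∧ e ∈ (plant j).alph)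
  /-- transitions are labeled only by events of the owning plant's alphabet -/
  dom : ∀ i q e, (plant i).δ q e ≠ none → e ∈ (plant i).alph
  /-- Property 2: each plant is strongly connected ... -/
  sc : ∀ i, (plant i).StronglyConnected
  /-- ... with at least one marked state -/
  hasMarked : ∀ i, ∃ q, q ∈ (plant i).Qm
  /-- each restricted event belongs to some plant -/
  evIn : ∀ r ∈ reqs, ∃ i, r.1 ∈ (plant i).alph
  /-- Property 3.b: restricted events are controllable -/
  ctrl : ∀ r ∈ reqs, r.1 ∈ Sc
  /-- Property 3.c: at most one requirement per event -/
  uniq : ∀ r1 ∈ reqs, ∀ r2 ∈ reqs, r1.1 = r2.1 → r1 = r2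
  /-- Property 3.e: each conjunction references each plant at most once -/
  once : ∀ r ∈ reqs, ∀ conj ∈ r.2, ∀ l1 ∈ conj, ∀ l2 ∈ conj, l1.i = l2.i → l1 = l2
  /-- Property 3.f: no negated reference to a single-state plant -/
  nneg : ∀ r ∈ reqs, ∀ conj ∈ r.2, ∀ l ∈ conj, l.pos = false → ∃ a b : Q l.i, a ≠ b
  /-- Property 3.g: each plant referenced in a condition is a sensor automaton -/
  sens : ∀ r ∈ reqs, ∀ conj ∈ r.2, ∀ l ∈ conj, (plant l.i).alph ⊆ Su
  /-- each condition is a nonempty DNF -/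
  condNe : ∀ r ∈ reqs, r.2 ≠ []

namespace CNMS

variable {m : ℕ} {Q : Fin m → Type} {E : Type}

/-- The composed (monolithic) plant `‖𝒫`. -/
noncomputable def plantComp (cp : CNMS m Q E) : Aut (∀ i, Q i) E :=
  Aut.shuffle cp.plant

/-- `𝒫 ‖ 𝓡`: the plant composed with all requirements. -/
noncomputable def sup (cp : CNMS m Q E) : Aut (∀ i, Q i) E :=
  cp.reqs.foldl (fun A r => A.restrict r.1 (fun g => r.2.eval g)) cp.plantComp

end CNMS

namespace Aut

section Runs

variable {Q E : Type} (A : Aut Q E)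

lemma run_append (q : Q) (s t : List E) :
    A.run q (s ++ t) = (A.run q s).bind fun q' => A.run q' t := by
  induction s generalizing q with
  | nil => rfl
  | cons e s ih =>
    simp only [List.cons_append, run]
    cases A.δ q e <;> simp [ih]

lemma mem_alph_of_run_eq_some (hdom : ∀ q e, A.δ q e ≠ none → e ∈ A.alph)
    {s : List E} {q q' : Q} (hs : A.run q s = some q') : ∀ e ∈ s, e ∈ A.alph := by
  induction s generalizing q with
  | nil => simp
  | cons f s ih =>
    rcases hδ : A.δ q f with _ | y
    · simp [run, hδ] at hs
    · simp only [run, hδ, Option.bind_some] at hs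
      intro e he
      rcases List.mem_cons.1 he with rfl | he
      · exact hdom q e (by simp [hδ])
      · exact ih hs e he

lemma run_restrict_eq_of_invariant {μ : E} {C I : Q → Prop} {s : List E}
    (hI : ∀ q e q', I q → e ∈ s → A.δ q e = some q' → I q')
    (hC : ∀ q, I q → μ ∈ s → C q) {q : Q} (hq : I q) :
    (A.restrict μ C).run q s = A.run q s := by
  induction s generalizing q with
  | nil => rfl
  | cons e s ih =>
    have henabled : ¬(e = μ ∧ ¬C q) := fun ⟨he, hnC⟩ =>
      hnC (hC q hq (he ▸ List.mem_cons_self))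
    have hδ : (A.restrict μ C).δ q e = A.δ q e := if_neg henabled
    simp only [run, hδ]
    rcases hstep : A.δ q e with _ | q'
    · rfl
    · exact ih (fun p f p' hp hf => hI p f p' hp (List.mem_cons_of_mem _ hf))
        (fun p hp hμ => hC p hp (List.mem_cons_of_mem _ hμ))
        (hI q e q' hq List.mem_cons_self hstep)

lemma run_restrict_of_not_mem {μ : E} {C : Q → Prop} {s : List E} (hμ : μ ∉ s) (q : Q) :
    (A.restrict μ C).run q s = A.run q s :=
  A.run_restrict_eq_of_invariant (I := fun _ => True) (fun _ _ _ _ _ _ => trivial)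
    (fun _ _ h => absurd h hμ) trivial

end Runs

section Shuffle

variable {m : ℕ} {Q : Fin m → Type} {E : Type} (A : ∀ i, Aut (Q i) E)

lemma exists_update_of_shuffle_δ_eq_some {q q' : ∀ i, Q i} {e : E}
    (h : (shuffle A).δ q e = some q') :
    ∃ i, e ∈ (A i).alph ∧ ∃ y, q' = Function.update q i y := by
  simp only [shuffle] at h
  split_ifs at h with he
  obtain ⟨y, -, rfl⟩ := Option.map_eq_some_iff.1 h
  exact ⟨he.choose, he.choose_spec, y, rfl⟩

lemma shuffle_δ_of_mem_alph (hdisj : ∀ i j, i ≠ j → ∀ e, ¬(e ∈ (A i).alph ∧ e ∈ (A j).alph))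
    {i : Fin m} {e : E} (he : e ∈ (A i).alph) (q : ∀ j, Q j) :
    (shuffle A).δ q e = ((A i).δ (q i) e).map fun y => Function.update q i y := by
  have h : ∃ j, e ∈ (A j).alph := ⟨i, he⟩
  obtain rfl : h.choose = i := by
    by_contra hne
    exact hdisj _ _ hne e ⟨h.choose_spec, he⟩
  simp only [shuffle, dif_pos h]

lemma shuffle_run_of_run (hdisj : ∀ i j, i ≠ j → ∀ e, ¬(e ∈ (A i).alph ∧ e ∈ (A j).alph))
    (hdom : ∀ i q e, (A i).δ q e ≠ none → e ∈ (A i).alph) {i : Fin m} {s : List E}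
    {q : ∀ j, Q j} {p : Q i} (hs : (A i).run (q i) s = some p) :
    (shuffle A).run q s = some (Function.update q i p) := by
  induction s generalizing q with
  | nil =>
    obtain rfl : q i = p := Option.some.inj hs
    simp [run]
  | cons e s ih =>
    rcases hδ : (A i).δ (q i) e with _ | y
    · simp [run, hδ] at hs
    · simp only [run, hδ, Option.bind_some] at hs
      have he : e ∈ (A i).alph := hdom i (q i) e (by simp [hδ])
      have htail := ih (q := Function.update q i y) (by rwa [Function.update_self])
      rw [run, shuffle_δ_of_mem_alph A hdisj he, hδ, Option.map_some, Option.bind_some, htail,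
        Function.update_idem]

lemma exists_shuffle_run_piecewise
    (hdisj : ∀ i j, i ≠ j → ∀ e, ¬(e ∈ (A i).alph ∧ e ∈ (A j).alph))
    (hdom : ∀ i q e, (A i).δ q e ≠ none → e ∈ (A i).alph) (hsc : ∀ i, (A i).StronglyConnected)
    (T : Finset (Fin m)) (g t : ∀ i, Q i) :
    ∃ s, (shuffle A).run g s = some (T.piecewise t g) ∧
      ∀ e ∈ s, ∃ i ∈ T, e ∈ (A i).alph := by
  induction T using Finset.induction_on with
  | empty => exact ⟨[], by simp [run], by simp⟩
  | insert j T _ ih =>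
    obtain ⟨s, hs, hsT⟩ := ih
    obtain ⟨s', hs'⟩ := hsc j (T.piecewise t g j) (t j)
    refine ⟨s ++ s', ?_, ?_⟩
    · rw [run_append, hs, Option.bind_some, Finset.piecewise_insert]
      exact shuffle_run_of_run A hdisj hdom hs'
    · intro e he
      rcases List.mem_append.1 he with he | he
      · obtain ⟨i, hi, hei⟩ := hsT e he
        exact ⟨i, Finset.mem_insert_of_mem hi, hei⟩
      · exact ⟨j, Finset.mem_insert_self j T,
          mem_alph_of_run_eq_some _ (hdom j) hs' e he⟩

end Shuffle

end Aut

namespace Lit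

variable {m : ℕ} {Q : Fin m → Type}

def refs (conj : List (Lit m Q)) : Finset (Fin m) := (conj.map Lit.i).toFinset

lemma mem_refs {conj : List (Lit m Q)} {i : Fin m} : i ∈ refs conj ↔ ∃ l ∈ conj, l.i = i := by
  simp [refs]

lemma i_mem_refs {conj : List (Lit m Q)} {l : Lit m Q} (hl : l ∈ conj) : l.i ∈ refs conj :=
  mem_refs.2 ⟨l, hl, rfl⟩

lemma eval_congr (l : Lit m Q) {g g' : ∀ i, Q i} (h : g l.i = g' l.i) :
    l.eval g ↔ l.eval g' := by
  simp only [eval, h]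

lemma exists_eval_update (l : Lit m Q) (hneg : l.pos = false → ∃ a b : Q l.i, a ≠ b)
    (g : ∀ i, Q i) : ∃ v, l.eval (Function.update g l.i v) := by
  cases hpos : l.pos
  · obtain ⟨a, b, hab⟩ := hneg hpos
    refine ⟨if a = l.q then b else a, ?_⟩
    simp only [eval, hpos, Bool.false_eq_true, if_false, Function.update_self]
    split_ifs with ha
    · exact fun hb => hab (ha.trans hb.symm)
    · exact ha
  · exact ⟨l.q, by simp [eval, hpos]⟩

lemma exists_forall_eval (conj : List (Lit m Q))
    (honce : ∀ l₁ ∈ conj, ∀ l₂ ∈ conj, l₁.i = l₂.i → l₁ = l₂)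
    (hneg : ∀ l ∈ conj, l.pos = false → ∃ a b : Q l.i, a ≠ b) (g : ∀ i, Q i) :
    ∃ x : ∀ i, Q i, ∀ l ∈ conj, l.eval x := by
  induction conj with
  | nil => exact ⟨g, by simp⟩
  | cons l rest ih =>
    obtain ⟨x, hx⟩ := ih
      (fun l₁ h₁ l₂ h₂ => honce l₁ (List.mem_cons_of_mem _ h₁) l₂ (List.mem_cons_of_mem _ h₂))
      (fun l' hl' => hneg l' (List.mem_cons_of_mem _ hl'))
    obtain ⟨v, hv⟩ := l.exists_eval_update (hneg l List.mem_cons_self) x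
    refine ⟨Function.update x l.i v, ?_⟩
    rintro l' (_ | ⟨_, hl'⟩)
    · exact hv
    · by_cases hi : l'.i = l.i
      · rwa [honce l' (List.mem_cons_of_mem _ hl') l List.mem_cons_self hi]
      · exact (l'.eval_congr (Function.update_of_ne hi v x)).2 (hx l' hl')

end Lit

namespace CNMS

variable {m : ℕ} {Q : Fin m → Type} {E : Type} (cp : CNMS m Q E)
  {r : E × DNF m Q} {conj : List (Lit m Q)}

lemma exists_run_piecewise_referenced (hr : r ∈ cp.reqs) (hconj : conj ∈ r.2)
    (g t : ∀ i, Q i) :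
    ∃ s, (cp.plantComp.restrict r.1 (fun g => r.2.eval g)).run g s =
      some ((Lit.refs conj).piecewise t g) := by
  obtain ⟨s, hs, hsT⟩ := Aut.exists_shuffle_run_piecewise cp.plant cp.disj cp.dom cp.sc
    (Lit.refs conj) g t
  have hμ : r.1 ∉ s := by
    intro hμ
    obtain ⟨i, hi, hμi⟩ := hsT r.1 hμ
    obtain ⟨l, hl, rfl⟩ := Lit.mem_refs.1 hi
    exact cp.part r.1 ⟨cp.ctrl r hr, cp.sens r hr conj hconj l hl hμi⟩
  exact ⟨s, (Aut.run_restrict_of_not_mem _ hμ g).trans hs⟩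

lemma exists_run_piecewise_unreferenced (hconj : conj ∈ r.2) {g : ∀ i, Q i}
    (hg : ∀ l ∈ conj, l.eval g) (t : ∀ i, Q i) :
    ∃ s, (cp.plantComp.restrict r.1 (fun g => r.2.eval g)).run g s =
      some ((Lit.refs conj)ᶜ.piecewise t g) := by
  obtain ⟨s, hs, hsT⟩ := Aut.exists_shuffle_run_piecewise cp.plant cp.disj cp.dom cp.sc
    (Lit.refs conj)ᶜ g t
  refine ⟨s, ?_⟩
  rw [Aut.run_restrict_eq_of_invariant _ (I := fun q => ∀ j ∈ Lit.refs conj, q j = g j) ?_ ?_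
    (fun _ _ => rfl)]
  · exact hs
  · intro q e q' hq he hstep j hj
    obtain ⟨i, hei, y, rfl⟩ := Aut.exists_update_of_shuffle_δ_eq_some cp.plant hstep
    obtain ⟨i', hi', hei'⟩ := hsT e he
    obtain rfl : i = i' := by
      by_contra hne
      exact cp.disj i i' hne e ⟨hei, hei'⟩
    have hji : j ≠ i := by
      rintro rfl
      exact Finset.mem_compl.1 hi' hj
    rw [Function.update_of_ne hji, hq j hj]
  · intro q hq _
    exact ⟨conj, hconj, fun l hl => (l.eval_congr (hq l.i (Lit.i_mem_refs hl))).2 (hg l hl)⟩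

end CNMS

/-- for a CNMS control problem, `P ‖ Rj` is nonblocking for
every single requirement `Rj`. -/
theorem cnms_single_req_nonblocking {m : ℕ} {Q : Fin m → Type} {E : Type}
    (cp : CNMS m Q E) (r : E × DNF m Q) (hr : r ∈ cp.reqs) :
    (cp.plantComp.restrict r.1 (fun g => r.2.eval g)).Nonblocking := by
  intro g _
  obtain ⟨conj, hconj⟩ := List.exists_mem_of_ne_nil _ (cp.condNe r hr)
  choose qm hqm using cp.hasMarked
  obtain ⟨x, hx⟩ := Lit.exists_forall_eval conj (cp.once r hr conj hconj)
    (cp.nneg r hr conj hconj) qm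
  obtain ⟨s₁, h₁⟩ := cp.exists_run_piecewise_referenced hr hconj g x
  have hconj₁ : ∀ l ∈ conj, l.eval ((Lit.refs conj).piecewise x g) := fun l hl =>
    (l.eval_congr (Finset.piecewise_eq_of_mem _ _ _ (Lit.i_mem_refs hl))).2 (hx l hl)
  obtain ⟨s₂, h₂⟩ := cp.exists_run_piecewise_unreferenced hconj hconj₁ qm
  obtain ⟨s₃, h₃⟩ := cp.exists_run_piecewise_referenced hr hconj _ qm
  have hmarked : (Lit.refs conj).piecewise qm ((Lit.refs conj)ᶜ.piecewise qm
      ((Lit.refs conj).piecewise x g)) = qm := by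
    ext j
    by_cases hj : j ∈ Lit.refs conj <;> simp [hj]
  refine ⟨s₁ ++ s₂ ++ s₃, qm, ?_, hqm⟩
  rw [Aut.run_append, Aut.run_append, h₁, Option.bind_some, h₂, Option.bind_some, h₃, hmarked]
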